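/- arXiv:0809.4931 — 7 statements merged into one kernel-verified Lean document; each statement's English description precedes it below -/
import Mathlib

section
/- Let g ≥ 0 be an integer, let X ∈ ℂ[s] be a polynomial of degree 2g+2 which is not the square of a polynomial and with X(0) ≠ 0, let t ∈ ℂ be nonzero, and fix ξ, η ∈ ℂ with ξ² = X(0) and η² = X(t). Then there exists a unique triple of polynomials (A, B, C) in ℂ[s] with deg A ≤ g+1, deg B ≤ g, deg C ≤ g, such that A(0) = ξ, A = η + C·(s − t), and X − A² = B·s^{g+1}·(s − t). -/
/-!
Newton's iteration produces a square root `P` of `X` modulo `s^(g+1)` with `P(0) = ξ`, of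
degree `≤ g`. Adding `c·s^(g+1)` does not disturb this congruence, and `c` can be chosen so that
the value at `t` becomes `η`; then `A² ≡ X` also modulo `s - t`, and `B`, `C` are the quotients.
For uniqueness, two such `A` satisfy `s^(g+1) ∣ (A' - A)(A' + A)` with `(A' + A)(0) = 2ξ ≠ 0`, and
`(s - t) ∣ A' - A`; a nonzero multiple of `s^(g+1)(s - t)` has degree at least `g + 2`.
-/

open Polynomial

namespace Polynomial

section Domain

variable {R : Type*} [CommRing R] [IsDomain R]

theorem natDegree_le_of_eq_mul {p q r : R[X]} {n : ℕ} (hp : p ≠ 0) (h : q = r * p)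
    (hq : q.natDegree ≤ n + p.natDegree) : r.natDegree ≤ n := by
  rcases eq_or_ne r 0 with rfl | hr
  · simp
  · rw [h, natDegree_mul hr hp] at hq
    omega

theorem X_pow_dvd_sub_of_X_pow_dvd_sq_sub_sq {A B : R[X]} {n : ℕ} (h : X ^ n ∣ A ^ 2 - B ^ 2)
    (h0 : (A + B).eval 0 ≠ 0) : X ^ n ∣ A - B := by
  refine prime_X.pow_dvd_of_dvd_mul_left n ?_ (by rwa [sq_sub_sq] at h)
  rwa [X_dvd_iff, coeff_zero_eq_eval_zero]

end Domain

section Field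

variable {K : Type*} [Field K]

theorem isCoprime_X_pow_X_sub_C {t : K} (ht : t ≠ 0) (n : ℕ) :
    IsCoprime (X ^ n : K[X]) (X - C t) := by
  refine IsCoprime.pow_left ?_
  simpa using isCoprime_X_sub_C_of_isUnit_sub (R := K) (a := 0) (b := t) (by simpa using ht)

theorem natDegree_X_pow_mul_X_sub_C (t : K) (n : ℕ) :
    ((X : K[X]) ^ n * (X - C t)).natDegree = n + 1 := by
  rw [natDegree_mul (pow_ne_zero _ X_ne_zero) (X_sub_C_ne_zero t), natDegree_X_pow,
    natDegree_X_sub_C]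

theorem exists_natDegree_le_X_pow_dvd_sub_sq [NeZero (2 : K)] {f : K[X]} {ξ : K} (hξ0 : ξ ≠ 0)
    (hξ : ξ ^ 2 = f.eval 0) (n : ℕ) :
    ∃ P : K[X], P.natDegree ≤ n ∧ P.eval 0 = ξ ∧ X ^ (n + 1) ∣ f - P ^ 2 := by
  induction n with
  | zero =>
    refine ⟨C ξ, by simp, by simp, ?_⟩
    rw [pow_one, X_dvd_iff, coeff_zero_eq_eval_zero]
    simp [hξ]
  | succ n ih =>
    obtain ⟨P, hPd, hP0, Q, hQ⟩ := ih
    set c : K := Q.eval 0 / (2 * ξ)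
    refine ⟨P + C c * X ^ (n + 1), ?_, by simp [hP0], ?_⟩
    · exact natDegree_add_le_of_degree_le (hPd.trans n.le_succ) (natDegree_C_mul_X_pow_le c _)
    · have hstep : f - (P + C c * X ^ (n + 1)) ^ 2 =
          X ^ (n + 1) * (Q - C (2 * c) * P - C (c ^ 2) * X ^ (n + 1)) := by
        simp only [C_mul, C_pow, C_ofNat]
        linear_combination hQ
      rw [hstep, pow_succ]
      refine mul_dvd_mul_left _ ?_
      rw [X_dvd_iff, coeff_zero_eq_eval_zero]
      simp only [eval_sub, eval_mul, eval_pow, eval_C, eval_X, hP0, c]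
      field_simp
      ring

theorem exists_natDegree_le_X_pow_mul_X_sub_C_dvd_sub_sq [NeZero (2 : K)] {f : K[X]}
    {ξ η t : K} (hξ0 : ξ ≠ 0) (hξ : ξ ^ 2 = f.eval 0) (hη : η ^ 2 = f.eval t) (ht : t ≠ 0)
    (n : ℕ) : ∃ A : K[X], A.natDegree ≤ n + 1 ∧ A.eval 0 = ξ ∧ A.eval t = η ∧
      X ^ (n + 1) * (X - C t) ∣ f - A ^ 2 := by
  obtain ⟨P, hPd, hP0, hPdvd⟩ := exists_natDegree_le_X_pow_dvd_sub_sq hξ0 hξ n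
  set c : K := (η - P.eval t) / t ^ (n + 1)
  have hAt : (P + C c * X ^ (n + 1)).eval t = η := by
    simp only [eval_add, eval_mul, eval_C, eval_pow, eval_X, c]
    field_simp
    ring
  refine ⟨P + C c * X ^ (n + 1),
    natDegree_add_le_of_degree_le (hPd.trans n.le_succ) (natDegree_C_mul_X_pow_le c _),
    by simp [hP0], hAt, (isCoprime_X_pow_X_sub_C ht _).mul_dvd ?_ ?_⟩
  · have hshift : f - (P + C c * X ^ (n + 1)) ^ 2 =
        f - P ^ 2 - X ^ (n + 1) * (C (2 * c) * P + C (c ^ 2) * X ^ (n + 1)) := by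
      simp only [C_mul, C_pow, C_ofNat]
      ring
    rw [hshift]
    exact dvd_sub hPdvd (dvd_mul_right _ _)
  · rw [dvd_iff_isRoot]
    simp [hAt, hη]

theorem eq_of_X_pow_mul_X_sub_C_dvd_sub_sq [NeZero (2 : K)] {f A A' : K[X]} {t : K} {n : ℕ}
    (hA : A.natDegree ≤ n + 1) (hA' : A'.natDegree ≤ n + 1) (h0 : A'.eval 0 = A.eval 0)
    (hA0 : A.eval 0 ≠ 0) (hAt : A'.eval t = A.eval t) (ht : t ≠ 0)
    (hdvd : X ^ (n + 1) ∣ f - A ^ 2) (hdvd' : X ^ (n + 1) ∣ f - A' ^ 2) : A' = A := by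
  have hX : X ^ (n + 1) ∣ A' - A := by
    refine X_pow_dvd_sub_of_X_pow_dvd_sq_sub_sq ?_ ?_
    · simpa using dvd_sub hdvd hdvd'
    · simpa [h0, ← two_mul, two_ne_zero] using hA0
  have hXt : X - C t ∣ A' - A := by
    rw [dvd_iff_isRoot]
    simp [hAt]
  refine sub_eq_zero.mp (eq_zero_of_dvd_of_natDegree_lt
    ((isCoprime_X_pow_X_sub_C ht _).mul_dvd hX hXt) ?_)
  rw [natDegree_X_pow_mul_X_sub_C]
  exact (natDegree_sub_le _ _).trans_lt (by omega)

end Field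

end Polynomial

theorem stmt_0_general (g : ℕ) (XX : ℂ[X]) (hdeg : XX.natDegree = 2 * g + 2)
    (hX0 : XX.eval 0 ≠ 0) (t : ℂ) (ht : t ≠ 0)
    (ξ η : ℂ) (hξ : ξ ^ 2 = XX.eval 0) (hη : η ^ 2 = XX.eval t) :
    ∃! ABC : ℂ[X] × ℂ[X] × ℂ[X],
      ABC.1.natDegree ≤ g + 1 ∧ ABC.2.1.natDegree ≤ g ∧ ABC.2.2.natDegree ≤ g ∧
      ABC.1.eval 0 = ξ ∧
      ABC.1 = C η + ABC.2.2 * (X - C t) ∧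
      XX - ABC.1 ^ 2 = ABC.2.1 * X ^ (g + 1) * (X - C t) := by
  have hξ0 : ξ ≠ 0 := by rintro rfl; exact hX0 (by simpa using hξ.symm)
  obtain ⟨A, hAd, hA0, hAt, B, hB⟩ :=
    exists_natDegree_le_X_pow_mul_X_sub_C_dvd_sub_sq hξ0 hξ hη ht g
  obtain ⟨Q, hQ⟩ := hAt ▸ X_sub_C_dvd_sub_C_eval (p := A) (a := t)
  have hM0 : (X : ℂ[X]) ^ (g + 1) * (X - C t) ≠ 0 := mul_ne_zero (by simp) (X_sub_C_ne_zero t)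
  refine ⟨(A, B, Q), ⟨hAd, ?_, ?_, hA0, by linear_combination hQ, by rw [hB]; ring⟩, ?_⟩
  · refine natDegree_le_of_eq_mul hM0 (hB.trans (mul_comm _ _)) ?_
    rw [natDegree_X_pow_mul_X_sub_C]
    exact (natDegree_sub_le _ _).trans (max_le (by omega) (natDegree_pow_le.trans (by omega)))
  · refine natDegree_le_of_eq_mul (X_sub_C_ne_zero t) (hQ.trans (mul_comm _ _)) ?_
    rw [natDegree_X_sub_C]
    exact (natDegree_sub_le _ _).trans (max_le hAd (by simp))
  rintro ⟨A', B', Q'⟩ ⟨hA'd, -, -, hA'0, hA', hB'⟩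
  simp only at hA'd hA'0 hA' hB'
  obtain rfl : A' = A := eq_of_X_pow_mul_X_sub_C_dvd_sub_sq hAd hA'd (hA'0.trans hA0.symm)
    (hA0 ▸ hξ0) (by simp [hA', hAt]) ht (dvd_of_mul_right_dvd ⟨B, hB⟩)
    ⟨B' * (X - C t), by rw [hB']; ring⟩
  obtain rfl : Q' = Q := mul_right_cancel₀ (X_sub_C_ne_zero t) (by linear_combination hQ - hA')
  obtain rfl : B' = B := mul_right_cancel₀ hM0 (by linear_combination hB - hB')
  rfl

/-- **Basic Algebraic Lemma.** For a polynomial `XX` of degree `2g+2` which is not a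
square, with `XX(0) ≠ 0`, a nonzero `t`, and square roots `ξ` of `XX(0)` and `η` of
`XX(t)`, there is a unique triple `(A, B, C)` of polynomials with `deg A ≤ g+1`,
`deg B ≤ g`, `deg C ≤ g` such that `A(0) = ξ`, `A = η + C·(s−t)` and
`XX − A² = B·s^{g+1}·(s−t)`. -/
theorem stmt_0 (g : ℕ) (XX : ℂ[X]) (hdeg : XX.natDegree = 2 * g + 2)
    (hsq : ¬ ∃ P : ℂ[X], XX = P ^ 2)
    (hX0 : XX.eval 0 ≠ 0) (t : ℂ) (ht : t ≠ 0)
    (ξ η : ℂ) (hξ : ξ ^ 2 = XX.eval 0) (hη : η ^ 2 = XX.eval t) :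
    ∃! ABC : ℂ[X] × ℂ[X] × ℂ[X],
      ABC.1.natDegree ≤ g + 1 ∧ ABC.2.1.natDegree ≤ g ∧ ABC.2.2.natDegree ≤ g ∧
      ABC.1.eval 0 = ξ ∧
      ABC.1 = C η + ABC.2.2 * (X - C t) ∧
      XX - ABC.1 ^ 2 = ABC.2.1 * X ^ (g + 1) * (X - C t) :=
  stmt_0_general g XX hdeg hX0 t ht ξ η hξ hη
end

section
/- Let X = p₀ + p₁s + p₂s² + p₃s³ + p₄s⁴ ∈ ℂ[s] with p₀ ≠ 0, fix ξ ∈ ℂ with ξ² = p₀, and let q₁, q₂, q₃ be the coefficients of the unique formal power series 1 + q₁s + q₂s² + q₃s³ + ⋯ ∈ ℂ[[s]] whose square is X/p₀. Let t ∈ ℂ be nonzero and η ∈ ℂ with η² = X(t). Suppose A = A₀ + A₁s + A₂s², B = B₀ + B₁s, C = C₀ + C₁s satisfy A(0) = ξ, A = η + C·(s − t), and X − A² = B·s²·(s − t). Then: A₀ = ξ, A₁ = ξq₁, A₂ = (η − ξ(1 + q₁t))/t², C₀ = (η − ξ)/t, C₁ = A₂, B₀ = (2ξ/t³)·(η − ξ(1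 + q₁t + q₂t²)), and B₁ = (2ξ/t⁴)·((1 + q₁t)η − ξ(1 + 2q₁t + (q₁² + q₂)t² + (q₁q₂ + q₃)t³)). -/
open Polynomial

private lemma deg2_eq (p : ℂ[X]) (h : p.natDegree ≤ 2) :
    p = C (p.coeff 0) + C (p.coeff 1) * X + C (p.coeff 2) * X ^ 2 := by
  ext n
  simp only [coeff_add, coeff_C_mul, coeff_X_pow, coeff_C, coeff_X]
  match n with
  | 0 => simp
  | 1 => simp
  | 2 => simp
  | (m+3) => rw [p.coeff_eq_zero_of_natDegree_lt (by omega)]; simp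

private lemma deg1_eq (p : ℂ[X]) (h : p.natDegree ≤ 1) :
    p = C (p.coeff 0) + C (p.coeff 1) * X := by
  ext n
  simp only [coeff_add, coeff_C_mul, coeff_C, coeff_X]
  match n with
  | 0 => simp
  | 1 => simp
  | (m+2) => rw [p.coeff_eq_zero_of_natDegree_lt (by omega)]; simp

/-- Explicit formulas for the coefficients of the polynomials `A, B, Cp` of the Basic
Algebraic Lemma in the genus-one (elliptic) case `X = p₀ + p₁s + p₂s² + p₃s³ + p₄s⁴`. -/
theorem stmt_3 (p₀ p₁ p₂ p₃ p₄ : ℂ) (hp₀ : p₀ ≠ 0)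
    (XX : ℂ[X]) (hXX : XX = C p₀ + C p₁ * X + C p₂ * X ^ 2 + C p₃ * X ^ 3 + C p₄ * X ^ 4)
    (ξ : ℂ) (hξ : ξ ^ 2 = p₀)
    (τ : PowerSeries ℂ) (hτ0 : PowerSeries.constantCoeff τ = 1)
    (hτ : PowerSeries.C p₀ * τ ^ 2 = (XX : PowerSeries ℂ))
    (q₁ q₂ q₃ : ℂ) (hq₁ : q₁ = PowerSeries.coeff 1 τ)
    (hq₂ : q₂ = PowerSeries.coeff 2 τ) (hq₃ : q₃ = PowerSeries.coeff 3 τ)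
    (t : ℂ) (ht : t ≠ 0) (η : ℂ) (hη : η ^ 2 = XX.eval t)
    (A B Cp : ℂ[X]) (hAdeg : A.natDegree ≤ 2) (hBdeg : B.natDegree ≤ 1)
    (hCdeg : Cp.natDegree ≤ 1)
    (hA0 : A.eval 0 = ξ) (hAC : A = C η + Cp * (X - C t))
    (hB : XX - A ^ 2 = B * X ^ 2 * (X - C t)) :
    A.coeff 0 = ξ ∧
    A.coeff 1 = ξ * q₁ ∧
    A.coeff 2 = (η - ξ * (1 + q₁ * t)) / t ^ 2 ∧
    Cp.coeff 0 = (η - ξ) / t ∧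
    Cp.coeff 1 = A.coeff 2 ∧
    B.coeff 0 = (2 * ξ / t ^ 3) * (η - ξ * (1 + q₁ * t + q₂ * t ^ 2)) ∧
    B.coeff 1 = (2 * ξ / t ^ 4) *
      ((1 + q₁ * t) * η -
        ξ * (1 + 2 * q₁ * t + (q₁ ^ 2 + q₂) * t ^ 2 + (q₁ * q₂ + q₃) * t ^ 3)) := by
  have hξ0 : ξ ≠ 0 := by
    intro h; apply hp₀; rw [← hξ, h]; ring
  set a0 := A.coeff 0 with ha0def
  set a1 := A.coeff 1 with ha1def
  set a2 := A.coeff 2 with ha2def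
  set b0 := B.coeff 0 with hb0def
  set b1 := B.coeff 1 with hb1def
  set c0 := Cp.coeff 0 with hc0def
  set c1 := Cp.coeff 1 with hc1def
  have hAe : A = C a0 + C a1 * X + C a2 * X ^ 2 := deg2_eq A hAdeg
  have hBe : B = C b0 + C b1 * X := deg1_eq B hBdeg
  have hCe : Cp = C c0 + C c1 * X := deg1_eq Cp hCdeg
  have ha0 : a0 = ξ := by rw [ha0def, Polynomial.coeff_zero_eq_eval_zero, hA0]
  -- coefficients of XX
  have tXX1 : XX.coeff 1 = p₁ := by
    rw [hXX]; simp [coeff_add, coeff_C_mul, coeff_X_pow, coeff_C]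
  have tXX2 : XX.coeff 2 = p₂ := by
    rw [hXX]; simp [coeff_add, coeff_C_mul, coeff_X_pow, coeff_C]
  have tXX3 : XX.coeff 3 = p₃ := by
    rw [hXX]; simp [coeff_add, coeff_C_mul, coeff_X_pow, coeff_C]
  -- power series equations
  have e1 : p₀ * (2 * q₁) = p₁ := by
    have h := congrArg (PowerSeries.coeff 1) hτ
    rw [sq, PowerSeries.coeff_C_mul, PowerSeries.coeff_mul,
      Finset.Nat.sum_antidiagonal_eq_sum_range_succ_mk] at h
    simp [Finset.sum_range_succ, Polynomial.coeff_coe, hτ0] at h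
    rw [← tXX1, ← h, hq₁]; ring
  have e2 : p₀ * (2 * q₂ + q₁ ^ 2) = p₂ := by
    have h := congrArg (PowerSeries.coeff 2) hτ
    rw [sq, PowerSeries.coeff_C_mul, PowerSeries.coeff_mul,
      Finset.Nat.sum_antidiagonal_eq_sum_range_succ_mk] at h
    simp [Finset.sum_range_succ, Polynomial.coeff_coe, hτ0] at h
    rw [← tXX2, ← h, hq₁, hq₂]; ring
  have e3 : p₀ * (2 * q₃ + 2 * q₁ * q₂) = p₃ := by
    have h := congrArg (PowerSeries.coeff 3) hτ
    rw [sq, PowerSeries.coeff_C_mul, PowerSeries.coeff_mul,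
      Finset.Nat.sum_antidiagonal_eq_sum_range_succ_mk] at h
    simp [Finset.sum_range_succ, Polynomial.coeff_coe, hτ0] at h
    rw [← tXX3, ← h, hq₁, hq₂, hq₃]; ring
  -- equations from hAC
  have hAC' : C a0 + C a1 * X + C a2 * X ^ 2
      = C (η - c0 * t) + C (c0 - c1 * t) * X + C c1 * X ^ 2 := by
    rw [← hAe, hAC, hCe]
    simp only [map_mul, map_add, map_sub]
    ring
  have f0 : a0 = η - c0 * t := by
    have h := congrArg (fun q => Polynomial.coeff q 0) hAC'
    simp only [coeff_add, coeff_C_mul, coeff_X_pow, coeff_C, coeff_X] at h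
    norm_num at h
    linear_combination h
  have f1 : a1 = c0 - c1 * t := by
    have h := congrArg (fun q => Polynomial.coeff q 1) hAC'
    simp only [coeff_add, coeff_C_mul, coeff_X_pow, coeff_C, coeff_X] at h
    norm_num at h
    linear_combination h
  have f2 : a2 = c1 := by
    have h := congrArg (fun q => Polynomial.coeff q 2) hAC'
    simp only [coeff_add, coeff_C_mul, coeff_X_pow, coeff_C, coeff_X] at h
    norm_num at h
    linear_combination h
  -- equations from hB
  have hB' : C p₀ + C p₁ * X + C p₂ * X ^ 2 + C p₃ * X ^ 3 + C p₄ * X ^ 4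
      - (C (a0^2) + C (2*a0*a1) * X + C (a1^2 + 2*a0*a2) * X^2
        + C (2*a1*a2) * X^3 + C (a2^2) * X^4)
      = C (-(b0*t)) * X ^ 2 + C (b0 - b1*t) * X ^ 3 + C b1 * X ^ 4 := by
    have h := hB
    rw [hXX, hAe, hBe] at h
    simp only [map_mul, map_add, map_sub, map_pow, map_ofNat, map_neg]
    linear_combination h
  have g1 : p₁ - 2 * a0 * a1 = 0 := by
    have h := congrArg (fun q => Polynomial.coeff q 1) hB'
    simp only [coeff_add, coeff_sub, coeff_C_mul, coeff_X_pow, coeff_C, coeff_X] at h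
    norm_num at h
    linear_combination h
  have g2 : p₂ - (a1 ^ 2 + 2 * a0 * a2) = -(b0 * t) := by
    have h := congrArg (fun q => Polynomial.coeff q 2) hB'
    simp only [coeff_add, coeff_sub, coeff_C_mul, coeff_X_pow, coeff_C, coeff_X] at h
    norm_num at h
    linear_combination h
  have g3 : p₃ - 2 * a1 * a2 = b0 - b1 * t := by
    have h := congrArg (fun q => Polynomial.coeff q 3) hB'
    simp only [coeff_add, coeff_sub, coeff_C_mul, coeff_X_pow, coeff_C, coeff_X] at h
    norm_num at h
    linear_combination h
  -- scalar algebra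
  have ra1 : a1 = ξ * q₁ := by
    have h : 2 * ξ * a1 = 2 * ξ * (ξ * q₁) := by
      linear_combination -g1 - e1 - 2 * a1 * ha0 - 2 * q₁ * hξ
    exact mul_left_cancel₀ (by simpa using hξ0) h
  have hA2t : a2 * t ^ 2 = η - ξ * (1 + q₁ * t) := by
    linear_combination t^2 * f2 + t * f1 + f0 - ha0 - t * ra1
  have ra2 : a2 = (η - ξ * (1 + q₁ * t)) / t ^ 2 := by
    rw [eq_div_iff (pow_ne_zero 2 ht)]; linear_combination hA2t
  have rc0 : c0 = (η - ξ) / t := by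
    rw [eq_div_iff ht]; linear_combination f0 - ha0
  have G2 : 2 * ξ * a2 - 2 * ξ ^ 2 * q₂ = b0 * t := by
    linear_combination -g2 - e2 - 2 * a2 * ha0 - (2*q₂ + q₁^2) * hξ - (a1 + ξ*q₁) * ra1
  have hb0t : b0 * t ^ 3 = 2 * ξ * (η - ξ * (1 + q₁ * t + q₂ * t ^ 2)) := by
    linear_combination -(t^2) * G2 + 2 * ξ * hA2t
  have rb0 : b0 = (2 * ξ / t ^ 3) * (η - ξ * (1 + q₁ * t + q₂ * t ^ 2)) := by
    rw [div_mul_eq_mul_div, eq_div_iff (pow_ne_zero 3 ht)]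
    linear_combination hb0t
  have rb1 : b1 = (2 * ξ / t ^ 4) *
      ((1 + q₁ * t) * η -
        ξ * (1 + 2 * q₁ * t + (q₁ ^ 2 + q₂) * t ^ 2 + (q₁ * q₂ + q₃) * t ^ 3)) := by
    rw [div_mul_eq_mul_div, eq_div_iff (pow_ne_zero 4 ht)]
    linear_combination t^3 * g3 + hb0t + t^3 * e3 + 2*(q₃ + q₁*q₂)*t^3 * hξ
      + 2*a2*t^3 * ra1 + 2*ξ*q₁*t * hA2t
  exact ⟨ha0, ra1, ra2, rc0, f2.symm, rb0, rb1⟩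
end

section
/- Let X = p₀ + p₁s + p₂s² + p₃s³ + p₄s⁴ ∈ ℂ[s] with p₀ ≠ 0, and let q₁, q₂, q₃, q₄ be the first coefficients of the unique formal power series 1 + q₁s + q₂s² + ⋯ ∈ ℂ[[s]] whose square is X/p₀. Let λ ∈ ℂ with p₀λ² ≠ p₄ and with v := (q₂ − λ)/2 ≠ 0, and suppose t, t′ ∈ ℂ are nonzero and satisfy (p₄ − p₀λ²)s² + (p₃ − p₁λ)s + 2p₀(q₂ − λ) = (p₄ − p₀λ²)(s − t)(s − t′) as polynomials in s. Set u = −1/t − q₁ and u′ = −1/t′ − q₁. Then u + u′ = −q₁ + q₃/(2v) and v + u·u′ = q₂ + q₄/(2v). -/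
open Polynomial

/-!
Comparing coefficients in `p₀ τ² = X` gives `p₁ = 2p₀q₁`, `p₃ = 2p₀(q₃ + q₁q₂)` and
`p₄ = p₀(2q₄ + 2q₁q₃ + q₂²)`. The factorisation says that `1/t, 1/t'` are the roots of the
reversed quadratic `c w² + b w + a` with `a = p₄ − p₀λ²`, `b = p₃ − p₁λ`, `c = 2p₀(q₂ − λ) = 4p₀v`,
so `1/t + 1/t' = −b/c` and `1/(tt') = a/c`. Substituting the coefficient identities into these
two Vieta relations turns them into the claimed formulas for `u + u'` and `v + uu'`.
-/

namespace PowerSeries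

variable {R : Type*} [CommRing R] {τ : PowerSeries R}

theorem coeff_one_sq_of_constantCoeff_eq_one (h : constantCoeff τ = 1) :
    coeff 1 (τ ^ 2) = 2 * coeff 1 τ := by
  rw [← coeff_zero_eq_constantCoeff_apply] at h
  simp only [sq, coeff_mul, Finset.Nat.sum_antidiagonal_eq_sum_range_succ_mk,
    Finset.sum_range_succ, Finset.sum_range_zero, h]
  ring

theorem coeff_three_sq_of_constantCoeff_eq_one (h : constantCoeff τ = 1) :
    coeff 3 (τ ^ 2) = 2 * coeff 3 τ + 2 * coeff 1 τ * coeff 2 τ := by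
  rw [← coeff_zero_eq_constantCoeff_apply] at h
  simp only [sq, coeff_mul, Finset.Nat.sum_antidiagonal_eq_sum_range_succ_mk,
    Finset.sum_range_succ, Finset.sum_range_zero, h]
  ring

theorem coeff_four_sq_of_constantCoeff_eq_one (h : constantCoeff τ = 1) :
    coeff 4 (τ ^ 2) = 2 * coeff 4 τ + 2 * coeff 1 τ * coeff 3 τ + coeff 2 τ ^ 2 := by
  rw [← coeff_zero_eq_constantCoeff_apply] at h
  simp only [sq, coeff_mul, Finset.Nat.sum_antidiagonal_eq_sum_range_succ_mk,
    Finset.sum_range_succ, Finset.sum_range_zero, h]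
  ring

end PowerSeries

section SquareRootOfQuartic

variable {R : Type*} [CommRing R] {p₀ p₁ p₂ p₃ p₄ : R} {τ : PowerSeries R}

theorem coeff_eq_of_C_mul_sq_eq_quartic (hτ0 : PowerSeries.constantCoeff τ = 1)
    (hτ : PowerSeries.C p₀ * τ ^ 2 =
      ((C p₀ + C p₁ * X + C p₂ * X ^ 2 + C p₃ * X ^ 3 + C p₄ * X ^ 4 : R[X]) : PowerSeries R)) :
    p₁ = 2 * p₀ * PowerSeries.coeff 1 τ ∧
    p₃ = 2 * p₀ * (PowerSeries.coeff 3 τ + PowerSeries.coeff 1 τ * PowerSeries.coeff 2 τ) ∧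
    p₄ = p₀ * (2 * PowerSeries.coeff 4 τ + 2 * PowerSeries.coeff 1 τ * PowerSeries.coeff 3 τ +
      PowerSeries.coeff 2 τ ^ 2) := by
  have hcoeff (n : ℕ) := congrArg (PowerSeries.coeff n) hτ
  simp only [PowerSeries.coeff_C_mul, coeff_coe] at hcoeff
  have h1 := hcoeff 1
  have h3 := hcoeff 3
  have h4 := hcoeff 4
  rw [PowerSeries.coeff_one_sq_of_constantCoeff_eq_one hτ0] at h1
  rw [PowerSeries.coeff_three_sq_of_constantCoeff_eq_one hτ0] at h3
  rw [PowerSeries.coeff_four_sq_of_constantCoeff_eq_one hτ0] at h4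
  simp only [coeff_add, coeff_C_succ, coeff_mul_X, coeff_C, ↓reduceIte, zero_add, coeff_C_mul,
    coeff_X_pow, OfNat.one_ne_ofNat, mul_zero, add_zero, Nat.succ_ne_self, mul_one,
    Nat.reduceEqDiff] at h1 h3 h4
  exact ⟨by linear_combination -h1, by linear_combination -h3, by linear_combination -h4⟩

end SquareRootOfQuartic

namespace Polynomial

section CommRing

variable {R : Type*} [CommRing R] {a b c t t' : R}

theorem quadratic_vieta (h : C a * X ^ 2 + C b * X + C c = C a * (X - C t) * (X - C t')) :
    b = -a * (t + t') ∧ c = a * (t * t') := by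
  have h0 := congrArg (coeff · 0) h
  have h1 := congrArg (coeff · 1) h
  simp only [coeff_add, mul_coeff_zero, coeff_C, ↓reduceIte, coeff_X_pow, OfNat.zero_ne_ofNat,
    mul_zero, coeff_X, one_ne_zero, add_zero, zero_add, mul_sub, sub_mul, mul_assoc, X_mul_C,
    coeff_sub, sub_self, zero_sub, sub_neg_eq_add, coeff_C_mul, OfNat.one_ne_ofNat, coeff_mul_X,
    coeff_mul_C, zero_mul, sub_zero] at h0 h1
  exact ⟨by linear_combination h1, by linear_combination h0⟩

end CommRing

variable {K : Type*} [Field K] {a b c t t' : K}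

theorem quadratic_vieta_inv (h : C a * X ^ 2 + C b * X + C c = C a * (X - C t) * (X - C t'))
    (hc : c ≠ 0) : t⁻¹ + t'⁻¹ = -b / c ∧ t⁻¹ * t'⁻¹ = a / c := by
  obtain ⟨hb, rfl⟩ := quadratic_vieta h
  have ht : t ≠ 0 := by rintro rfl; simp at hc
  have ht' : t' ≠ 0 := by rintro rfl; simp at hc
  have ha : a ≠ 0 := by rintro rfl; simp at hc
  constructor
  · field_simp
    linear_combination hb
  · field_simp

end Polynomial

theorem stmt_7_general (p₀ p₁ p₂ p₃ p₄ : ℂ) (hp₀ : p₀ ≠ 0)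
    (XX : ℂ[X]) (hXX : XX = C p₀ + C p₁ * X + C p₂ * X ^ 2 + C p₃ * X ^ 3 + C p₄ * X ^ 4)
    (τ : PowerSeries ℂ) (hτ0 : PowerSeries.constantCoeff τ = 1)
    (hτ : PowerSeries.C p₀ * τ ^ 2 = (XX : PowerSeries ℂ))
    (q₁ q₂ q₃ q₄ : ℂ) (hq₁ : q₁ = PowerSeries.coeff 1 τ)
    (hq₂ : q₂ = PowerSeries.coeff 2 τ) (hq₃ : q₃ = PowerSeries.coeff 3 τ)
    (hq₄ : q₄ = PowerSeries.coeff 4 τ)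
    (lam : ℂ)
    (v : ℂ) (hv : v = (q₂ - lam) / 2) (hvne : v ≠ 0)
    (t t' : ℂ)
    (hfac : C (p₄ - p₀ * lam ^ 2) * X ^ 2 + C (p₃ - p₁ * lam) * X + C (2 * p₀ * (q₂ - lam))
      = C (p₄ - p₀ * lam ^ 2) * (X - C t) * (X - C t'))
    (u u' : ℂ) (hu : u = -1 / t - q₁) (hu' : u' = -1 / t' - q₁) :
    u + u' = -q₁ + q₃ / (2 * v) ∧
    v + u * u' = q₂ + q₄ / (2 * v) := by
  subst hXX
  obtain ⟨hp₁, hp₃, hp₄⟩ := coeff_eq_of_C_mul_sq_eq_quartic hτ0 hτ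
  simp only [← hq₁, ← hq₂, ← hq₃, ← hq₄] at hp₁ hp₃ hp₄
  have hq₂lam : q₂ - lam ≠ 0 := by rintro h; simp [hv, h] at hvne
  obtain ⟨hsum, hprod⟩ := quadratic_vieta_inv hfac
    (mul_ne_zero (mul_ne_zero two_ne_zero hp₀) hq₂lam)
  have hsum' : t⁻¹ + t'⁻¹ = -q₁ - q₃ / (2 * v) := by
    rw [hsum, hp₁, hp₃, hv]
    field_simp
    ring
  have hprod' : t⁻¹ * t'⁻¹ = q₄ / (2 * v) + q₁ * q₃ / (2 * v) + (q₂ + lam) / 2 := by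
    rw [hprod, hp₄, hv]
    field_simp
    ring
  rw [hu, hu', neg_div, neg_div, one_div, one_div]
  constructor
  · linear_combination -hsum'
  · linear_combination hprod' + q₁ * hsum' + hv

/-- First set of recurrence relations for the normal form of the genus-one Halphen
continued fraction: with `u = −1/t − q₁`, `u′ = −1/t′ − q₁`, `v = (q₂ − λ)/2 ≠ 0`,
one has `u + u′ = −q₁ + q₃/(2v)` and `v + u·u′ = q₂ + q₄/(2v)`. -/
theorem stmt_7 (p₀ p₁ p₂ p₃ p₄ : ℂ) (hp₀ : p₀ ≠ 0)
    (XX : ℂ[X]) (hXX : XX = C p₀ + C p₁ * X + C p₂ * X ^ 2 + C p₃ * X ^ 3 + C p₄ * X ^ 4)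
    (τ : PowerSeries ℂ) (hτ0 : PowerSeries.constantCoeff τ = 1)
    (hτ : PowerSeries.C p₀ * τ ^ 2 = (XX : PowerSeries ℂ))
    (q₁ q₂ q₃ q₄ : ℂ) (hq₁ : q₁ = PowerSeries.coeff 1 τ)
    (hq₂ : q₂ = PowerSeries.coeff 2 τ) (hq₃ : q₃ = PowerSeries.coeff 3 τ)
    (hq₄ : q₄ = PowerSeries.coeff 4 τ)
    (lam : ℂ) (hlam : p₀ * lam ^ 2 ≠ p₄)
    (v : ℂ) (hv : v = (q₂ - lam) / 2) (hvne : v ≠ 0)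
    (t t' : ℂ) (ht : t ≠ 0) (ht' : t' ≠ 0)
    (hfac : C (p₄ - p₀ * lam ^ 2) * X ^ 2 + C (p₃ - p₁ * lam) * X + C (2 * p₀ * (q₂ - lam))
      = C (p₄ - p₀ * lam ^ 2) * (X - C t) * (X - C t'))
    (u u' : ℂ) (hu : u = -1 / t - q₁) (hu' : u' = -1 / t' - q₁) :
    u + u' = -q₁ + q₃ / (2 * v) ∧
    v + u * u' = q₂ + q₄ / (2 * v) :=
  stmt_7_general p₀ p₁ p₂ p₃ p₄ hp₀ XX hXX τ hτ0 hτ q₁ q₂ q₃ q₄ hq₁ hq₂ hq₃ hq₄ lam v hv hvne t t'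
    hfac u u' hu hu'
end

section
/- Let X = p₀ + p₁s + p₂s² + p₃s³ + p₄s⁴ ∈ ℂ[s] with p₀ ≠ 0, fix ξ with ξ² = p₀, and let q₁, q₂, q₃, q₄ be the first coefficients of the unique formal power series 1 + q₁s + q₂s² + ⋯ ∈ ℂ[[s]] whose square is X/p₀. Let t ∈ ℂ be nonzero and η ∈ ℂ with η² = X(t), and set λ = (η/ξ − (1 + q₁t))/t², λ′ = (−η/ξ − (1 + q₁t))/t², u = −1/t − q₁, v = (q₂ − λ′)/2 and v″ = (q₂ − λ)/2. Then v + v″ = q₂ + q₁u + u² and 2v·v″ = −q₄ + q₃u. -/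
/-!
Comparing coefficients in `p₀ τ² = X` shows that `X(t) / p₀` is the value at `t` of the
degree-4 truncation of `τ²`, so `r = η / ξ` satisfies
`r² = 1 + 2q₁t + (2q₂ + q₁²)t² + (2q₃ + 2q₁q₂)t³ + (2q₄ + 2q₁q₃ + q₂²)t⁴`.
Since `λ, λ′ = (±r − 1 − q₁t) / t²`, the sum `v + v″` does not involve `r` at all, and
`2vv″` involves only `r²`; both identities are then rational-function identities in `t`.
-/

open Polynomial

namespace PowerSeries

theorem eval_trunc_five_sq {R : Type*} [CommRing R] (τ : R⟦X⟧) (hτ0 : constantCoeff τ = 1)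
    (t : R) :
    (trunc 5 (τ ^ 2)).eval t =
      1 + 2 * coeff 1 τ * t + (2 * coeff 2 τ + coeff 1 τ ^ 2) * t ^ 2
        + (2 * coeff 3 τ + 2 * coeff 1 τ * coeff 2 τ) * t ^ 3
        + (2 * coeff 4 τ + 2 * coeff 1 τ * coeff 3 τ + coeff 2 τ ^ 2) * t ^ 4 := by
  have h0 : coeff 0 τ = 1 := by simpa using hτ0
  rw [eval, eval₂_trunc_eq_sum_range]
  simp only [Finset.sum_range_succ, Finset.sum_range_zero, sq, coeff_mul,
    Finset.Nat.sum_antidiagonal_eq_sum_range_succ_mk, h0, RingHom.id_apply]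
  ring

end PowerSeries

section
variable {K : Type*} [Field K]

theorem halphen_recurrence_add (q₁ q₂ t r : K) (h2 : (2 : K) ≠ 0) (ht : t ≠ 0) :
    (q₂ - (-r - (1 + q₁ * t)) / t ^ 2) / 2 + (q₂ - (r - (1 + q₁ * t)) / t ^ 2) / 2 =
      q₂ + q₁ * (-1 / t - q₁) + (-1 / t - q₁) ^ 2 := by
  field_simp
  ring

theorem halphen_recurrence_mul (q₁ q₂ q₃ q₄ t r : K) (h2 : (2 : K) ≠ 0) (ht : t ≠ 0)
    (hr : r ^ 2 = 1 + 2 * q₁ * t + (2 * q₂ + q₁ ^ 2) * t ^ 2 + (2 * q₃ + 2 * q₁ * q₂) * t ^ 3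
      + (2 * q₄ + 2 * q₁ * q₃ + q₂ ^ 2) * t ^ 4) :
    2 * ((q₂ - (-r - (1 + q₁ * t)) / t ^ 2) / 2 * ((q₂ - (r - (1 + q₁ * t)) / t ^ 2) / 2)) =
      -q₄ + q₃ * (-1 / t - q₁) := by
  field_simp
  linear_combination -hr

end

/-- Second set of recurrence relations for the normal form of the genus-one Halphen
continued fraction: with `λ = (η/ξ − (1 + q₁t))/t²`, `λ′ = (−η/ξ − (1 + q₁t))/t²`,
`u = −1/t − q₁`, `v = (q₂ − λ′)/2`, `v″ = (q₂ − λ)/2`, one has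
`v + v″ = q₂ + q₁u + u²` and `2v·v″ = −q₄ + q₃u`. -/
theorem stmt_8 (p₀ p₁ p₂ p₃ p₄ : ℂ) (hp₀ : p₀ ≠ 0)
    (XX : ℂ[X]) (hXX : XX = C p₀ + C p₁ * X + C p₂ * X ^ 2 + C p₃ * X ^ 3 + C p₄ * X ^ 4)
    (ξ : ℂ) (hξ : ξ ^ 2 = p₀)
    (τ : PowerSeries ℂ) (hτ0 : PowerSeries.constantCoeff τ = 1)
    (hτ : PowerSeries.C p₀ * τ ^ 2 = (XX : PowerSeries ℂ))
    (q₁ q₂ q₃ q₄ : ℂ) (hq₁ : q₁ = PowerSeries.coeff 1 τ)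
    (hq₂ : q₂ = PowerSeries.coeff 2 τ) (hq₃ : q₃ = PowerSeries.coeff 3 τ)
    (hq₄ : q₄ = PowerSeries.coeff 4 τ)
    (t : ℂ) (ht : t ≠ 0) (η : ℂ) (hη : η ^ 2 = XX.eval t)
    (lam lam' : ℂ)
    (hlam : lam = (η / ξ - (1 + q₁ * t)) / t ^ 2)
    (hlam' : lam' = (-η / ξ - (1 + q₁ * t)) / t ^ 2)
    (u v v'' : ℂ) (hu : u = -1 / t - q₁)
    (hv : v = (q₂ - lam') / 2) (hv'' : v'' = (q₂ - lam) / 2) :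
    v + v'' = q₂ + q₁ * u + u ^ 2 ∧
    2 * (v * v'') = -q₄ + q₃ * u := by
  have hξ0 : ξ ≠ 0 := ne_zero_pow two_ne_zero (hξ ▸ hp₀)
  have hdeg : XX.natDegree < 5 := by
    rw [hXX]
    compute_degree!
  have hXX_trunc : XX = C p₀ * PowerSeries.trunc 5 (τ ^ 2) := by
    rw [← PowerSeries.trunc_C_mul, hτ, PowerSeries.trunc_coe_eq_self hdeg]
  have hr : (η / ξ) ^ 2 = 1 + 2 * q₁ * t + (2 * q₂ + q₁ ^ 2) * t ^ 2
      + (2 * q₃ + 2 * q₁ * q₂) * t ^ 3 + (2 * q₄ + 2 * q₁ * q₃ + q₂ ^ 2) * t ^ 4 := by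
    rw [div_pow, hη, hXX_trunc, eval_mul, eval_C, PowerSeries.eval_trunc_five_sq τ hτ0,
      ← hξ, mul_div_cancel_left₀ _ (pow_ne_zero 2 hξ0), hq₁, hq₂, hq₃, hq₄]
  subst hv hv'' hlam hlam' hu
  rw [neg_div]
  exact ⟨halphen_recurrence_add q₁ q₂ t _ two_ne_zero ht,
    halphen_recurrence_mul q₁ q₂ q₃ q₄ t _ two_ne_zero ht hr⟩
end

section
/- Let X ∈ ℂ[s] be of degree 6 with X(0) = p₀ ≠ 0, fix ξ with ξ² = p₀, and let q₁, …, q₆ be the first coefficients of the unique formal power series 1 + q₁s + q₂s² + ⋯ ∈ ℂ[[s]] whose square is X/p₀. Let t ∈ ℂ be nonzero, η ∈ ℂ with η² = X(t), write w = 1 + q₁t + q₂t², and set λ = (η/ξ − w)/t³, λ′ = (−η/ξ − w)/t³, u = w/t² = (1 + q₁t + q₂t²)/t², v = (q₃ − λ′)/2, v′ = (q₃ − λ)/2. Then v + v′ = u/t + q₃ and 4v·v′ = −2q₆ − 2q₁q₅ − 2q₄u − 2q₅/t. -/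
open Polynomial

/-!
Write `r = η/ξ` and `P = w + q₃t³ = 1 + q₁t + q₂t² + q₃t³`. Since `X/p₀ = τ²` and `deg X = 6`,
`r² = X(t)/p₀` is the degree-six truncation of `τ(t)²`, which agrees with `P²` up to order three:
`r² = P² + 2t⁴E` with `E = q₄ + (q₅ + q₁q₄)t + (q₆ + q₁q₅ + q₂q₄)t²`. As `λ, λ′ = (±r − w)/t³`,
the sum `v + v′` only sees `w`, and `4vv′ = (P − r)(P + r)/t⁶ = −2E/t²`.
-/

theorem Polynomial.eval_eq_mul_sum_range_coeff_of_C_mul_eq {R : Type*} [CommRing R] {N : ℕ}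
    {X : R[X]} {p₀ : R} {σ : PowerSeries R} (hσ : PowerSeries.C p₀ * σ = X)
    (hN : X.natDegree < N) (t : R) :
    X.eval t = p₀ * ∑ n ∈ Finset.range N, PowerSeries.coeff n σ * t ^ n := by
  simp only [eval_eq_sum_range' hN, ← coeff_coe, ← hσ, PowerSeries.coeff_C_mul, Finset.mul_sum,
    mul_assoc]

theorem PowerSeries.sum_range_seven_coeff_sq_mul_pow {R : Type*} [CommRing R]
    (τ : PowerSeries R) (hτ0 : constantCoeff τ = 1) (t : R) :
    ∑ n ∈ Finset.range 7, coeff n (τ ^ 2) * t ^ n =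
      (1 + coeff 1 τ * t + coeff 2 τ * t ^ 2 + coeff 3 τ * t ^ 3) ^ 2 +
        2 * t ^ 4 * (coeff 4 τ + (coeff 5 τ + coeff 1 τ * coeff 4 τ) * t +
          (coeff 6 τ + coeff 1 τ * coeff 5 τ + coeff 2 τ * coeff 4 τ) * t ^ 2) := by
  have h0 : coeff 0 τ = 1 := by rw [coeff_zero_eq_constantCoeff_apply, hτ0]
  simp only [sq τ, coeff_mul, Finset.Nat.sum_antidiagonal_eq_sum_range_succ_mk,
    Finset.sum_range_succ, Finset.sum_range_zero, Nat.reduceSub, h0]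
  ring

theorem stmt_13_general (XX : ℂ[X]) (hdeg : XX.natDegree = 6)
    (p₀ : ℂ) (hp₀ne : p₀ ≠ 0)
    (ξ : ℂ) (hξ : ξ ^ 2 = p₀)
    (τ : PowerSeries ℂ) (hτ0 : PowerSeries.constantCoeff τ = 1)
    (hτ : PowerSeries.C p₀ * τ ^ 2 = (XX : PowerSeries ℂ))
    (q₁ q₂ q₃ q₄ q₅ q₆ : ℂ) (hq₁ : q₁ = PowerSeries.coeff 1 τ)
    (hq₂ : q₂ = PowerSeries.coeff 2 τ) (hq₃ : q₃ = PowerSeries.coeff 3 τ)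
    (hq₄ : q₄ = PowerSeries.coeff 4 τ) (hq₅ : q₅ = PowerSeries.coeff 5 τ)
    (hq₆ : q₆ = PowerSeries.coeff 6 τ)
    (t : ℂ) (ht : t ≠ 0) (η : ℂ) (hη : η ^ 2 = XX.eval t)
    (w : ℂ) (hw : w = 1 + q₁ * t + q₂ * t ^ 2)
    (lam lam' : ℂ)
    (hlam : lam = (η / ξ - w) / t ^ 3)
    (hlam' : lam' = (-η / ξ - w) / t ^ 3)
    (u v v' : ℂ) (hu : u = w / t ^ 2)
    (hv : v = (q₃ - lam') / 2) (hv' : v' = (q₃ - lam) / 2) :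
    v + v' = u / t + q₃ ∧
    4 * (v * v') = -2 * q₆ - 2 * q₁ * q₅ - 2 * q₄ * u - 2 * q₅ / t := by
  have hr : (η / ξ) ^ 2 = (w + q₃ * t ^ 3) ^ 2 +
      2 * t ^ 4 * (q₄ + (q₅ + q₁ * q₄) * t + (q₆ + q₁ * q₅ + q₂ * q₄) * t ^ 2) := by
    rw [div_pow, hη, eval_eq_mul_sum_range_coeff_of_C_mul_eq hτ (N := 7) (by omega),
      τ.sum_range_seven_coeff_sq_mul_pow hτ0, hξ, mul_div_cancel_left₀ _ hp₀ne,
      hw, hq₁, hq₂, hq₃, hq₄, hq₅, hq₆]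
  subst hv hv' hlam hlam' hu
  rw [neg_div]
  generalize η / ξ = r at hr ⊢
  constructor
  · field_simp
    ring
  · subst hw
    field_simp
    linear_combination (-4 : ℂ) * hr

/-- Recurrence relations for the normal form of the genus-two Halphen continued
fraction: with `w = 1 + q₁t + q₂t²`, `λ = (η/ξ − w)/t³`, `λ′ = (−η/ξ − w)/t³`,
`u = w/t²`, `v = (q₃ − λ′)/2`, `v′ = (q₃ − λ)/2`, one has `v + v′ = u/t + q₃` and
`4vv′ = −2q₆ − 2q₁q₅ − 2q₄u − 2q₅/t`. -/
theorem stmt_13 (XX : ℂ[X]) (hdeg : XX.natDegree = 6)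
    (p₀ : ℂ) (hp₀ : XX.eval 0 = p₀) (hp₀ne : p₀ ≠ 0)
    (ξ : ℂ) (hξ : ξ ^ 2 = p₀)
    (τ : PowerSeries ℂ) (hτ0 : PowerSeries.constantCoeff τ = 1)
    (hτ : PowerSeries.C p₀ * τ ^ 2 = (XX : PowerSeries ℂ))
    (q₁ q₂ q₃ q₄ q₅ q₆ : ℂ) (hq₁ : q₁ = PowerSeries.coeff 1 τ)
    (hq₂ : q₂ = PowerSeries.coeff 2 τ) (hq₃ : q₃ = PowerSeries.coeff 3 τ)
    (hq₄ : q₄ = PowerSeries.coeff 4 τ) (hq₅ : q₅ = PowerSeries.coeff 5 τ)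
    (hq₆ : q₆ = PowerSeries.coeff 6 τ)
    (t : ℂ) (ht : t ≠ 0) (η : ℂ) (hη : η ^ 2 = XX.eval t)
    (w : ℂ) (hw : w = 1 + q₁ * t + q₂ * t ^ 2)
    (lam lam' : ℂ)
    (hlam : lam = (η / ξ - w) / t ^ 3)
    (hlam' : lam' = (-η / ξ - w) / t ^ 3)
    (u v v' : ℂ) (hu : u = w / t ^ 2)
    (hv : v = (q₃ - lam') / 2) (hv' : v' = (q₃ - lam) / 2) :
    v + v' = u / t + q₃ ∧
    4 * (v * v') = -2 * q₆ - 2 * q₁ * q₅ - 2 * q₄ * u - 2 * q₅ / t :=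
  stmt_13_general XX hdeg p₀ hp₀ne ξ hξ τ hτ0 hτ q₁ q₂ q₃ q₄ q₅ q₆ hq₁ hq₂ hq₃ hq₄ hq₅ hq₆ t ht η hη
    w hw lam lam' hlam hlam' u v v' hu hv hv'
end

section
/- Under the hypotheses of the hyperelliptic Halphen continued-fraction package (see context), for every 0 ≤ k ≤ m the identity G_k − H_k·F = (−1)^{k+1}·Q₀·Q₁·⋯·Q_k holds in ℂ[[s]]. -/
open Polynomial

/-!
Write `Eₖ = Gₖ − Hₖ·F`. Since `G` and `H` obey the same recurrence, so does `E`, with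
`E₋₁ = 1` and `E₀ = C − F = −Q₀`. Factoring `X − Aᵢ² = (σ − Aᵢ)(σ + Aᵢ)` gives
`Qᵢ·(s − tᵢ) = σ − Aᵢ`, and from this the partial quotients satisfy
`βᵢ₊₁ − αᵢ₊₁·Qᵢ = Qᵢ·Qᵢ₊₁`. With that relation the recurrence
`Eⱼ₊₁ = αⱼ₊₁Eⱼ + βⱼ₊₁Eⱼ₋₁` telescopes into the signed product.
-/

section ContinuedFraction

variable {R : Type*} [CommRing R]

theorem eq_signed_prod_of_three_term_recurrence {E : ℤ → R} {a b q : ℕ → R} {m : ℕ}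
    (hE_neg_one : E (-1) = 1) (hE₀ : E 0 = -q 0)
    (hrec : ∀ i : ℕ, 1 ≤ i → i ≤ m → E i = a i * E (i - 1) + b i * E (i - 2))
    (hb : ∀ j : ℕ, j + 1 ≤ m → b (j + 1) - a (j + 1) * q j = q j * q (j + 1)) :
    ∀ k ≤ m, E k = (-1) ^ (k + 1) * ∏ i ∈ Finset.range (k + 1), q i := by
  suffices h : ∀ k ≤ m, E k = (-1) ^ (k + 1) * ∏ i ∈ Finset.range (k + 1), q i ∧
      E (k - 1) = (-1) ^ k * ∏ i ∈ Finset.range k, q i from fun k hk => (h k hk).1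
  intro k
  induction k with
  | zero => intro _; simp [hE₀, hE_neg_one]
  | succ j ih =>
    intro hj
    obtain ⟨hEj, hEj_pred⟩ := ih (by omega)
    have hE : E (j + 1) = a (j + 1) * E j + b (j + 1) * E (j - 1) := by
      have h := hrec (j + 1) (by omega) hj
      rwa [show ((j + 1 : ℕ) : ℤ) - 1 = j by push_cast; ring,
        show ((j + 1 : ℕ) : ℤ) - 2 = j - 1 by push_cast; ring] at h
    push_cast
    refine ⟨?_, by simpa using hEj⟩
    rw [hE, hEj, hEj_pred]
    simp only [Finset.prod_range_succ]
    linear_combination (-1) ^ j * (∏ i ∈ Finset.range j, q i) * hb j hj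

variable [IsDomain R]

theorem mul_eq_sub_of_mul_add_eq {σ a b c q : R} (hσa : σ + a ≠ 0) (hq : q * (σ + a) = b)
    (h : σ ^ 2 - a ^ 2 = b * c) : q * c = σ - a :=
  mul_right_cancel₀ hσa (by linear_combination c * hq - h)

theorem sub_mul_eq_mul_of_partial_quotients {σ z a a' b q q' α β u : R} (hu : u ≠ 0)
    (hβ : β * u = z * b) (hα : α * u = a + a') (hq : q * (σ + a) = b * z)
    (hq' : q' * u = σ - a') : β - α * q = q * q' :=
  mul_right_cancel₀ hu (by linear_combination hβ - q * hα - hq - q * hq')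

end ContinuedFraction

theorem stmt_18_general (g : ℕ)
    (XX : ℂ[X])
    (p₀ : ℂ) (hp₀ne : p₀ ≠ 0)
    (ξ : ℂ) (hξ : ξ ^ 2 = p₀)
    (σ : PowerSeries ℂ) (hσ0 : PowerSeries.constantCoeff σ = ξ)
    (hσ : σ ^ 2 = (XX : PowerSeries ℂ))
    (m : ℕ)
    (t : ℕ → ℂ) (ht : ∀ i ≤ m, t i ≠ 0)
    (A B : ℕ → ℂ[X])
    (hA0 : ∀ i ≤ m, (A i).eval 0 = ξ)
    (hXAB : ∀ i ≤ m, XX - (A i) ^ 2 = B i * X ^ (g + 1) * (X - C (t i)))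
    (η : ℂ)
    (Cp : ℂ[X]) (hCp : Cp * (X - C (t 0)) = A 0 - C η)
    (α β : ℕ → ℂ[X])
    (hα : ∀ i : ℕ, 1 ≤ i → i ≤ m → α i * (X - C (t i)) = A (i - 1) + A i)
    (hβ : ∀ i : ℕ, 1 ≤ i → i ≤ m → β i * (X - C (t i)) = X ^ (g + 1) * B (i - 1))
    (G H : ℤ → ℂ[X])
    (hGm1 : G (-1) = 1) (hHm1 : H (-1) = 0) (hG0 : G 0 = Cp) (hH0 : H 0 = 1)
    (hGrec : ∀ i : ℕ, 1 ≤ i → i ≤ m → G i = α i * G (i - 1) + β i * G (i - 2))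
    (hHrec : ∀ i : ℕ, 1 ≤ i → i ≤ m → H i = α i * H (i - 1) + β i * H (i - 2))
    (F : PowerSeries ℂ)
    (hF : F = (σ - PowerSeries.C η) * (((X - C (t 0) : ℂ[X]) : PowerSeries ℂ))⁻¹)
    (Q : ℕ → PowerSeries ℂ)
    (hQ : ∀ i ≤ m, Q i = (B i : PowerSeries ℂ) * PowerSeries.X ^ (g + 1)
      * (σ + (A i : PowerSeries ℂ))⁻¹) :
    ∀ k ≤ m, (G k : PowerSeries ℂ) - (H k : PowerSeries ℂ) * F
      = (-1) ^ (k + 1) * ∏ i ∈ Finset.range (k + 1), Q i := by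
  have hne : ∀ φ : PowerSeries ℂ, PowerSeries.constantCoeff φ ≠ 0 → φ ≠ 0 :=
    fun φ hφ h => hφ (by simp [h])
  have hξ₀ : ξ ≠ 0 := by rintro rfl; exact hp₀ne (by simp [← hξ])
  have hσA : ∀ i ≤ m, PowerSeries.constantCoeff (σ + (A i : PowerSeries ℂ)) ≠ 0 := by
    intro i hi
    simp [hσ0, coeff_zero_eq_eval_zero, hA0 i hi, hξ₀]
  have hu : ∀ i ≤ m, PowerSeries.constantCoeff ((X - C (t i) : ℂ[X]) : PowerSeries ℂ) ≠ 0 := by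
    intro i hi
    simpa using ht i hi
  have hQσ : ∀ i ≤ m,
      Q i * (σ + (A i : PowerSeries ℂ)) = (B i : PowerSeries ℂ) * PowerSeries.X ^ (g + 1) :=
    fun i hi => (PowerSeries.eq_mul_inv_iff_mul_eq (hσA i hi)).1 (hQ i hi)
  have hQu : ∀ i ≤ m,
      Q i * ((X - C (t i) : ℂ[X]) : PowerSeries ℂ) = σ - (A i : PowerSeries ℂ) := by
    intro i hi
    refine mul_eq_sub_of_mul_add_eq (hne _ (hσA i hi)) (hQσ i hi) ?_
    rw [hσ, ← coe_pow, ← coe_sub, hXAB i hi, coe_mul, coe_mul, coe_pow, coe_X]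
  have hFu : F * ((X - C (t 0) : ℂ[X]) : PowerSeries ℂ) = σ - PowerSeries.C η :=
    (PowerSeries.eq_mul_inv_iff_mul_eq (hu 0 m.zero_le)).1 hF
  refine eq_signed_prod_of_three_term_recurrence (E := fun i => (G i : PowerSeries ℂ) - H i * F)
    (a := fun i => (α i : PowerSeries ℂ)) (b := fun i => (β i : PowerSeries ℂ))
    (by simp [hGm1, hHm1]) ?_ ?_ ?_
  · refine mul_right_cancel₀ (hne _ (hu 0 m.zero_le)) ?_
    have hCu := congrArg ((↑) : ℂ[X] → PowerSeries ℂ) hCp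
    rw [coe_mul, coe_sub (A 0), coe_C] at hCu
    simp only [hG0, hH0, coe_one, one_mul]
    linear_combination hCu - hFu + hQu 0 m.zero_le
  · intro i hi₁ hi
    simp only [hGrec i hi₁ hi, hHrec i hi₁ hi, coe_add, coe_mul]
    ring
  · intro j hj
    have hβj := hβ (j + 1) (by omega) hj
    have hαj := hα (j + 1) (by omega) hj
    rw [Nat.add_sub_cancel] at hβj hαj
    refine sub_mul_eq_mul_of_partial_quotients (hne _ (hu (j + 1) hj)) ?_ ?_
      (hQσ j (by omega)) (hQu (j + 1) hj)
    · simpa only [coe_mul, coe_pow, coe_X] using congrArg ((↑) : ℂ[X] → PowerSeries ℂ) hβj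
    · simpa only [coe_mul, coe_add] using congrArg ((↑) : ℂ[X] → PowerSeries ℂ) hαj

/-- For the hyperelliptic Halphen continued-fraction package, for every `0 ≤ k ≤ m`
the identity `G_k − H_k·F = (−1)^{k+1}·Q₀·Q₁⋯Q_k` holds in `ℂ[[s]]`. -/
theorem stmt_18 (g : ℕ) (hg : 1 ≤ g)
    (XX : ℂ[X]) (hdeg : XX.natDegree = 2 * g + 2)
    (p₀ : ℂ) (hp₀ : XX.coeff 0 = p₀) (hp₀ne : p₀ ≠ 0)
    (ξ : ℂ) (hξ : ξ ^ 2 = p₀)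
    (σ : PowerSeries ℂ) (hσ0 : PowerSeries.constantCoeff σ = ξ)
    (hσ : σ ^ 2 = (XX : PowerSeries ℂ))
    (m : ℕ)
    (t : ℕ → ℂ) (ht : ∀ i ≤ m, t i ≠ 0)
    (A B : ℕ → ℂ[X])
    (hAdeg : ∀ i ≤ m, (A i).natDegree ≤ g + 1)
    (hA0 : ∀ i ≤ m, (A i).eval 0 = ξ)
    (hXAB : ∀ i ≤ m, XX - (A i) ^ 2 = B i * X ^ (g + 1) * (X - C (t i)))
    (hdvd : ∀ i < m, (X - C (t (i + 1))) ∣ B i)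
    (hAA : ∀ i < m, (A (i + 1)).eval (t (i + 1)) = -(A i).eval (t (i + 1)))
    (η : ℂ) (hη : η = (A 0).eval (t 0))
    (Cp : ℂ[X]) (hCp : Cp * (X - C (t 0)) = A 0 - C η)
    (α β : ℕ → ℂ[X])
    (hα : ∀ i : ℕ, 1 ≤ i → i ≤ m → α i * (X - C (t i)) = A (i - 1) + A i)
    (hβ : ∀ i : ℕ, 1 ≤ i → i ≤ m → β i * (X - C (t i)) = X ^ (g + 1) * B (i - 1))
    (G H : ℤ → ℂ[X])
    (hGm1 : G (-1) = 1) (hHm1 : H (-1) = 0) (hG0 : G 0 = Cp) (hH0 : H 0 = 1)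
    (hGrec : ∀ i : ℕ, 1 ≤ i → i ≤ m → G i = α i * G (i - 1) + β i * G (i - 2))
    (hHrec : ∀ i : ℕ, 1 ≤ i → i ≤ m → H i = α i * H (i - 1) + β i * H (i - 2))
    (F : PowerSeries ℂ)
    (hF : F = (σ - PowerSeries.C η) * (((X - C (t 0) : ℂ[X]) : PowerSeries ℂ))⁻¹)
    (Q : ℕ → PowerSeries ℂ)
    (hQ : ∀ i ≤ m, Q i = (B i : PowerSeries ℂ) * PowerSeries.X ^ (g + 1)
      * (σ + (A i : PowerSeries ℂ))⁻¹) :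
    ∀ k ≤ m, (G k : PowerSeries ℂ) - (H k : PowerSeries ℂ) * F
      = (-1) ^ (k + 1) * ∏ i ∈ Finset.range (k + 1), Q i :=
  stmt_18_general g XX p₀ hp₀ne ξ hξ σ hσ0 hσ m t ht A B hA0 hXAB η Cp hCp α β hα hβ G H hGm1 hHm1
    hG0 hH0 hGrec hHrec F hF Q hQ
end

section
/- Under the hypotheses of the hyperelliptic Halphen continued-fraction package (see context), the power series G_m − H_m·F ∈ ℂ[[s]] has a zero at s = 0 of order at least (g+1)(m+1), i.e. s^{(g+1)(m+1)} divides G_m − H_m·F in ℂ[[s]]. Moreover, if H_m(0) ≠ 0 then H_m is invertible in ℂ[[s]] and the power series F − G_m·H_m⁻¹ is also divisible by s^{(g+1)(m+1)} in ℂ[[s]]. -/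
open Polynomial

/-!
Write `E_i = G_i - H_i F`. From `X - A_i² = B_i s^{g+1} (s - t_i)` and `σ² = X` one gets
`σ - A_i = Q_i (s - t_i)`, so `F = C + Q_0` and `Q_{i-1} (α_i + Q_i) = β_i`: the `Q_i` are the
tails of the continued fraction `C + β_1/(α_1 + β_2/(α_2 + ⋯))` of `F`. Feeding this into the
continuant recurrence gives `E_i = -Q_i E_{i-1}` with `E_{-1} = 1`, so `E_m = ± Q_0 ⋯ Q_m`, and
every `Q_i` is divisible by `s^{g+1}`.
-/

section Continuant

variable {R : Type*} [CommRing R]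

theorem mul_add_eq_of_mul_eq_of_sub_eq_mul [IsDomain R] {σ a a' q q' α β b d : R}
    (hd : d ≠ 0) (hq : q * (σ + a) = b) (hq' : σ - a' = q' * d)
    (hα : α * d = a + a') (hβ : β * d = b) : q * (α + q') = β :=
  mul_right_cancel₀ hd (by linear_combination q * hα - q * hq' + hq - hβ)

theorem continuant_sub_mul_eq_neg_mul {G H : ℤ → R} {a b q : ℕ → R} {f : R} {m : ℕ}
    (h0 : G 0 - H 0 * f = -q 0 * (G (-1) - H (-1) * f))
    (hG : ∀ i : ℕ, 1 ≤ i → i ≤ m → G i = a i * G (i - 1) + b i * G (i - 2))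
    (hH : ∀ i : ℕ, 1 ≤ i → i ≤ m → H i = a i * H (i - 1) + b i * H (i - 2))
    (hb : ∀ i < m, q i * (a (i + 1) + q (i + 1)) = b (i + 1)) :
    ∀ i ≤ m, G i - H i * f = -q i * (G (i - 1) - H (i - 1) * f) := by
  intro i
  induction i with
  | zero => simpa using h0
  | succ n ih =>
    intro hn
    have hprev := ih (by omega)
    have hG' := hG (n + 1) (by omega) hn
    have hH' := hH (n + 1) (by omega) hn
    have hidx₁ : ((n + 1 : ℕ) : ℤ) - 1 = n := by push_cast; ring
    have hidx₂ : ((n + 1 : ℕ) : ℤ) - 2 = n - 1 := by push_cast; ring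
    rw [hidx₁, hidx₂] at hG' hH'
    rw [hidx₁, hG', hH', ← hb n hn]
    linear_combination (a (n + 1) + q (n + 1)) * hprev

theorem pow_mul_dvd_of_eq_neg_mul {E : ℤ → R} {q : ℕ → R} {x : R} {k m : ℕ}
    (hstep : ∀ i ≤ m, E i = -q i * E (i - 1)) (hq : ∀ i ≤ m, x ^ k ∣ q i) :
    x ^ (k * (m + 1)) ∣ E m := by
  induction m with
  | zero =>
    rw [hstep 0 le_rfl, zero_add, mul_one]
    exact (hq 0 le_rfl).neg_right.mul_right _
  | succ n ih =>
    have hidx : ((n + 1 : ℕ) : ℤ) - 1 = n := by push_cast; ring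
    rw [hstep (n + 1) le_rfl, hidx, mul_add_one, pow_add, mul_comm (x ^ _)]
    exact mul_dvd_mul (hq (n + 1) le_rfl).neg_right
      (ih (fun i hi => hstep i (by omega)) (fun i hi => hq i (by omega)))

end Continuant

namespace PowerSeries

variable {k : Type*} [Field k]

theorem sub_eq_mul_inv_mul_of_sq_sub_sq {σ a p d : k⟦X⟧} (h : constantCoeff (σ + a) ≠ 0)
    (hsq : σ ^ 2 - a ^ 2 = p * d) : σ - a = p * (σ + a)⁻¹ * d := by
  have hinv := PowerSeries.mul_inv_cancel _ h
  linear_combination (-(σ - a)) * hinv + (σ + a)⁻¹ * hsq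

theorem dvd_sub_mul_inv_of_dvd_sub_mul {d f g h : k⟦X⟧} (hh : constantCoeff h ≠ 0)
    (hd : d ∣ g - h * f) : d ∣ f - g * h⁻¹ := by
  have hinv := PowerSeries.mul_inv_cancel _ hh
  rw [show f - g * h⁻¹ = (g - h * f) * -h⁻¹ by linear_combination (-f) * hinv]
  exact hd.mul_right _

theorem sub_C_mul_inv_eq_add_of_sub_eq_mul {σ q : k⟦X⟧} {a c : k[X]} {η t : k} (ht : t ≠ 0)
    (hc : c * (Polynomial.X - Polynomial.C t) = a - Polynomial.C η)
    (hq : σ - (a : k⟦X⟧) = q * (X - C t)) :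
    (σ - C η) * ((Polynomial.X - Polynomial.C t : k[X]) : k⟦X⟧)⁻¹ = c + q := by
  have hlin : constantCoeff ((Polynomial.X - Polynomial.C t : k[X]) : k⟦X⟧) ≠ 0 := by
    simpa [Polynomial.constantCoeff_coe] using ht
  rw [eq_comm, eq_mul_inv_iff_mul_eq hlin]
  have hc' := congrArg ((↑) : k[X] → k⟦X⟧) hc
  push_cast at hc' ⊢
  linear_combination hc' - hq

end PowerSeries

theorem stmt_19_general (g : ℕ)
    (XX : ℂ[X])
    (p₀ : ℂ) (hp₀ne : p₀ ≠ 0)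
    (ξ : ℂ) (hξ : ξ ^ 2 = p₀)
    (σ : PowerSeries ℂ) (hσ0 : PowerSeries.constantCoeff σ = ξ)
    (hσ : σ ^ 2 = (XX : PowerSeries ℂ))
    (m : ℕ)
    (t : ℕ → ℂ) (ht : ∀ i ≤ m, t i ≠ 0)
    (A B : ℕ → ℂ[X])
    (hA0 : ∀ i ≤ m, (A i).eval 0 = ξ)
    (hXAB : ∀ i ≤ m, XX - (A i) ^ 2 = B i * X ^ (g + 1) * (X - C (t i)))
    (η : ℂ)
    (Cp : ℂ[X]) (hCp : Cp * (X - C (t 0)) = A 0 - C η)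
    (α β : ℕ → ℂ[X])
    (hα : ∀ i : ℕ, 1 ≤ i → i ≤ m → α i * (X - C (t i)) = A (i - 1) + A i)
    (hβ : ∀ i : ℕ, 1 ≤ i → i ≤ m → β i * (X - C (t i)) = X ^ (g + 1) * B (i - 1))
    (G H : ℤ → ℂ[X])
    (hGm1 : G (-1) = 1) (hHm1 : H (-1) = 0) (hG0 : G 0 = Cp) (hH0 : H 0 = 1)
    (hGrec : ∀ i : ℕ, 1 ≤ i → i ≤ m → G i = α i * G (i - 1) + β i * G (i - 2))
    (hHrec : ∀ i : ℕ, 1 ≤ i → i ≤ m → H i = α i * H (i - 1) + β i * H (i - 2))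
    (F : PowerSeries ℂ)
    (hF : F = (σ - PowerSeries.C η) * (((X - C (t 0) : ℂ[X]) : PowerSeries ℂ))⁻¹)
    (Q : ℕ → PowerSeries ℂ)
    (hQ : ∀ i ≤ m, Q i = (B i : PowerSeries ℂ) * PowerSeries.X ^ (g + 1)
      * (σ + (A i : PowerSeries ℂ))⁻¹) :
    PowerSeries.X ^ ((g + 1) * (m + 1))
      ∣ ((G m : PowerSeries ℂ) - (H m : PowerSeries ℂ) * F) ∧
    ((H m).coeff 0 ≠ 0 →
      IsUnit ((H m : ℂ[X]) : PowerSeries ℂ) ∧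
      PowerSeries.X ^ ((g + 1) * (m + 1))
        ∣ (F - (G m : PowerSeries ℂ) * (((H m : ℂ[X]) : PowerSeries ℂ))⁻¹)) := by
  have hξ0 : ξ ≠ 0 := by rintro rfl; simp [← hξ] at hp₀ne
  have hunit : ∀ i ≤ m, PowerSeries.constantCoeff (σ + (A i : PowerSeries ℂ)) ≠ 0 :=
    fun i hi => by
      simpa [constantCoeff_coe, coeff_zero_eq_eval_zero, hA0 i hi, hσ0, ← two_mul] using hξ0
  have hQmul : ∀ i ≤ m,
      Q i * (σ + (A i : PowerSeries ℂ)) = (B i : PowerSeries ℂ) * PowerSeries.X ^ (g + 1) :=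
    fun i hi => by rw [hQ i hi, mul_assoc, PowerSeries.inv_mul_cancel _ (hunit i hi), mul_one]
  have hσA : ∀ i ≤ m, σ - (A i : PowerSeries ℂ)
      = Q i * (PowerSeries.X - PowerSeries.C (t i)) := fun i hi => by
    rw [hQ i hi]
    refine PowerSeries.sub_eq_mul_inv_mul_of_sq_sub_sq (hunit i hi) ?_
    simpa [hσ] using congrArg ((↑) : ℂ[X] → PowerSeries ℂ) (hXAB i hi)
  have hFQ : F = Cp + Q 0 := hF.trans <|
    PowerSeries.sub_C_mul_inv_eq_add_of_sub_eq_mul (ht 0 m.zero_le) hCp (hσA 0 m.zero_le)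
  have htail : ∀ i < m, Q i * (α (i + 1) + Q (i + 1)) = (β (i + 1) : PowerSeries ℂ) :=
    fun i hi => mul_add_eq_of_mul_eq_of_sub_eq_mul
      (by simpa using coe_eq_zero_iff.not.2 (X_sub_C_ne_zero (t (i + 1))))
      (hQmul i hi.le) (hσA (i + 1) hi)
      (by simpa using congrArg ((↑) : ℂ[X] → PowerSeries ℂ) (hα (i + 1) (by omega) hi))
      (by simpa [mul_comm] using
        congrArg ((↑) : ℂ[X] → PowerSeries ℂ) (hβ (i + 1) (by omega) hi))
  have hstep := continuant_sub_mul_eq_neg_mul (G := fun j => (G j : PowerSeries ℂ))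
    (H := fun j => (H j : PowerSeries ℂ)) (a := fun i => α i) (b := fun i => β i) (f := F)
    (by simp only [hG0, hH0, hGm1, hHm1, hFQ, coe_one, coe_zero]; ring)
    (fun i h1 h2 => by simp only [hGrec i h1 h2, coe_add, coe_mul])
    (fun i h1 h2 => by simp only [hHrec i h1 h2, coe_add, coe_mul]) htail
  have hdvd := pow_mul_dvd_of_eq_neg_mul (E := fun j => (G j : PowerSeries ℂ) - H j * F) hstep
    fun i hi => by rw [hQ i hi]; exact (dvd_mul_left _ _).mul_right _
  refine ⟨hdvd, fun hH => ?_⟩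
  have hHcoeff : PowerSeries.constantCoeff (H m : PowerSeries ℂ) ≠ 0 := by
    rwa [constantCoeff_coe]
  exact ⟨PowerSeries.isUnit_iff_constantCoeff.2 hHcoeff.isUnit,
    PowerSeries.dvd_sub_mul_inv_of_dvd_sub_mul hHcoeff hdvd⟩

/-- For the hyperelliptic Halphen continued-fraction package, `G_m − H_m·F` has a zero
of order at least `(g+1)(m+1)` at `s = 0`; and if `H_m(0) ≠ 0` then `H_m` is invertible
in `ℂ[[s]]` and `F − G_m·H_m⁻¹` is also divisible by `s^{(g+1)(m+1)}`. -/
theorem stmt_19 (g : ℕ) (hg : 1 ≤ g)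
    (XX : ℂ[X]) (hdeg : XX.natDegree = 2 * g + 2)
    (p₀ : ℂ) (hp₀ : XX.coeff 0 = p₀) (hp₀ne : p₀ ≠ 0)
    (ξ : ℂ) (hξ : ξ ^ 2 = p₀)
    (σ : PowerSeries ℂ) (hσ0 : PowerSeries.constantCoeff σ = ξ)
    (hσ : σ ^ 2 = (XX : PowerSeries ℂ))
    (m : ℕ)
    (t : ℕ → ℂ) (ht : ∀ i ≤ m, t i ≠ 0)
    (A B : ℕ → ℂ[X])
    (hAdeg : ∀ i ≤ m, (A i).natDegree ≤ g + 1)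
    (hA0 : ∀ i ≤ m, (A i).eval 0 = ξ)
    (hXAB : ∀ i ≤ m, XX - (A i) ^ 2 = B i * X ^ (g + 1) * (X - C (t i)))
    (hdvd : ∀ i < m, (X - C (t (i + 1))) ∣ B i)
    (hAA : ∀ i < m, (A (i + 1)).eval (t (i + 1)) = -(A i).eval (t (i + 1)))
    (η : ℂ) (hη : η = (A 0).eval (t 0))
    (Cp : ℂ[X]) (hCp : Cp * (X - C (t 0)) = A 0 - C η)
    (α β : ℕ → ℂ[X])
    (hα : ∀ i : ℕ, 1 ≤ i → i ≤ m → α i * (X - C (t i)) = A (i - 1) + A i)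
    (hβ : ∀ i : ℕ, 1 ≤ i → i ≤ m → β i * (X - C (t i)) = X ^ (g + 1) * B (i - 1))
    (G H : ℤ → ℂ[X])
    (hGm1 : G (-1) = 1) (hHm1 : H (-1) = 0) (hG0 : G 0 = Cp) (hH0 : H 0 = 1)
    (hGrec : ∀ i : ℕ, 1 ≤ i → i ≤ m → G i = α i * G (i - 1) + β i * G (i - 2))
    (hHrec : ∀ i : ℕ, 1 ≤ i → i ≤ m → H i = α i * H (i - 1) + β i * H (i - 2))
    (F : PowerSeries ℂ)
    (hF : F = (σ - PowerSeries.C η) * (((X - C (t 0) : ℂ[X]) : PowerSeries ℂ))⁻¹)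
    (Q : ℕ → PowerSeries ℂ)
    (hQ : ∀ i ≤ m, Q i = (B i : PowerSeries ℂ) * PowerSeries.X ^ (g + 1)
      * (σ + (A i : PowerSeries ℂ))⁻¹) :
    PowerSeries.X ^ ((g + 1) * (m + 1))
      ∣ ((G m : PowerSeries ℂ) - (H m : PowerSeries ℂ) * F) ∧
    ((H m).coeff 0 ≠ 0 →
      IsUnit ((H m : ℂ[X]) : PowerSeries ℂ) ∧
      PowerSeries.X ^ ((g + 1) * (m + 1))
        ∣ (F - (G m : PowerSeries ℂ) * (((H m : ℂ[X]) : PowerSeries ℂ))⁻¹)) :=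
  stmt_19_general g XX p₀ hp₀ne ξ hξ σ hσ0 hσ m t ht A B hA0 hXAB η Cp hCp α β hα hβ G H hGm1 hHm1
    hG0 hH0 hGrec hHrec F hF Q hQ
end
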